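/- Let n be an odd positive integer, d a divisor of n with n | d², and ℓ an integer with ℓ² ≡ 1 (mod d²/n). Define B̃(d,ℓ) as the matrix indexed by ℤ/nℤ with B̃(d,ℓ)_{a,b} = 1 if n | d·a and b ≡ a·ℓ (mod d), else 0. Let S̃ be the matrix S̃_{a,b} = n^{-1/2}·exp(2πi ab/n). Then B̃(d,ℓ)·S̃ = S̃·B̃(d,ℓ). -/

import Mathlib

open Complex

/-- The 0-1 matrix `B̃(d,ℓ)` indexed by `ℤ/nℤ`:
entry `(a,b)` is `1` iff `n ∣ d·a` and `b ≡ a·ℓ (mod d)`. -/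
noncomputable def Btilde (n d : ℕ) (ℓ : ℤ) : Matrix (ZMod n) (ZMod n) ℂ :=
  fun a b => if n ∣ d * a.val ∧ (d : ℤ) ∣ ((b.val : ℤ) - (a.val : ℤ) * ℓ) then 1 else 0

/-- The normalized discrete Fourier transform matrix `S̃`. -/
noncomputable def Stilde (n : ℕ) : Matrix (ZMod n) (ZMod n) ℂ :=
  fun a b => ((n : ℂ) ^ ((1 : ℂ) / 2))⁻¹ *
    Complex.exp (2 * Real.pi * Complex.I * (a.val : ℂ) * (b.val : ℂ) / n)

/-!
Both matrices are symmetric: for `S̃` this is `ab = ba`, and for `B̃` it is the equivalence of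
"`m ∣ b` and `c ≡ bℓ (mod d)`" with "`m ∣ c` and `b ≡ cℓ (mod d)`", where `n = dm`, `d = mk` and
`ℓ² ≡ 1 (mod k)`. Hence `S̃B̃ = (B̃S̃)ᵀ`, and it suffices that `B̃S̃` is symmetric. Its `(a, b)`
entry is a sum of the character `c ↦ e(bc/n)` over the coset `aℓ + dℤ/nℤ`, which by orthogonality
is `n^{-1/2} (n/d) e(aℓb/n)` if `da = db = 0` in `ℤ/nℤ` and `0` otherwise: symmetric in `a` and `b`.
-/

open Finset AddSubgroup ZMod

open Classical in
theorem AddChar.sum_ite_sub_mem {G R : Type*} [AddGroup G] [Fintype G] [CommRing R] [IsDomain R]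
    (ψ : AddChar G R) (H : AddSubgroup G) (x : G) :
    ∑ g, (if g - x ∈ H then ψ g else 0) = if ∀ h ∈ H, ψ h = 1 then Nat.card H * ψ x else 0 := by
  have shift : ∑ g, (if g - x ∈ H then ψ g else 0) = (∑ h : H, ψ h) * ψ x := by
    rw [Fintype.sum_equiv (Equiv.subRight x) _ (fun g ↦ (if g ∈ H then ψ g else 0) * ψ x)
      fun g ↦ by simp [apply_ite (· * ψ x), ← AddChar.map_add_eq_mul]]
    rw [← sum_mul, ← sum_filter, sum_subtype _ (fun _ ↦ mem_filter_univ _)]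
  have orthogonality := (ψ.compAddMonoidHom H.subtype).sum_eq_ite
  simp only [AddChar.eq_zero_iff, AddChar.compAddMonoidHom_apply, AddSubgroup.coe_subtype,
    Subtype.forall, Nat.card_eq_fintype_card] at orthogonality ⊢
  rw [shift, orthogonality, ite_mul, zero_mul]

theorem Int.dvd_and_mul_dvd_sub_mul_swap {m k ℓ b c : ℤ} (hℓ : k ∣ ℓ ^ 2 - 1) (hc : m ∣ c)
    (hbc : m * k ∣ b - c * ℓ) : m ∣ b ∧ m * k ∣ c - b * ℓ := by
  obtain ⟨j, hj⟩ := hℓ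
  obtain ⟨t, rfl⟩ := hc
  obtain ⟨s, hs⟩ := hbc
  exact ⟨⟨t * ℓ + k * s, by linear_combination hs⟩,
    ⟨-t * j - s * ℓ, by linear_combination (-ℓ) * hs - m * t * hj⟩⟩

namespace ZMod

variable {n : ℕ} [NeZero n]

theorem natCast_mul_eq_zero_iff (d : ℕ) (a : ZMod n) : (d : ZMod n) * a = 0 ↔ n ∣ d * a.val := by
  rw [← natCast_eq_zero_iff, Nat.cast_mul, natCast_zmod_val]

theorem intCast_dvd_val_sub_iff {d : ℕ} (hd : d ∣ n) (c : ZMod n) (x : ℤ) :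
    (d : ℤ) ∣ c.val - x ↔ c - x ∈ zmultiples (d : ZMod n) := by
  rw [mem_zmultiples_iff]
  constructor
  · rintro ⟨k, hk⟩
    refine ⟨k, ?_⟩
    have := congrArg (Int.cast : ℤ → ZMod n) hk
    rw [Int.cast_sub, Int.cast_mul, Int.cast_natCast, Int.cast_natCast, natCast_zmod_val] at this
    rw [zsmul_eq_mul]
    linear_combination -this
  · rintro ⟨k, hk⟩
    have hn : (n : ℤ) ∣ c.val - x - d * k := by
      rw [← intCast_zmod_eq_zero_iff_dvd, Int.cast_sub, Int.cast_sub, Int.cast_mul,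
        Int.cast_natCast, Int.cast_natCast, natCast_zmod_val, mul_comm, ← zsmul_eq_mul, hk,
        sub_self]
    exact (dvd_sub_left (dvd_mul_right _ _)).mp ((Int.natCast_dvd_natCast.mpr hd).trans hn)

theorem card_zmultiples_natCast {d : ℕ} (hd : d ∣ n) :
    Nat.card (zmultiples (d : ZMod n)) = n / d := by
  rw [Nat.card_zmultiples, addOrderOf_coe _ (NeZero.ne n), Nat.gcd_eq_right hd]

theorem forall_mem_zmultiples_stdAddChar_mul_eq_one_iff (d : ℕ) (y : ZMod n) :
    (∀ h ∈ zmultiples (d : ZMod n), stdAddChar (y * h) = 1) ↔ (d : ZMod n) * y = 0 := by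
  constructor
  · intro h
    have := h d (mem_zmultiples _)
    rwa [← (stdAddChar (N := n)).map_zero_eq_one, injective_stdAddChar.eq_iff, mul_comm] at this
  · rintro hy _ ⟨k, rfl⟩
    rw [mul_smul_comm, mul_comm, hy, smul_zero, AddChar.map_zero_eq_one]

theorem sum_ite_intCast_dvd_val_sub {d : ℕ} (hd : d ∣ n) (x : ℤ) (y : ZMod n) :
    ∑ c : ZMod n, (if (d : ℤ) ∣ c.val - x then stdAddChar (y * c) else 0) =
      if (d : ZMod n) * y = 0 then (n / d : ℕ) * stdAddChar (y * (x : ZMod n)) else 0 := by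
  classical
  simp_rw [intCast_dvd_val_sub_iff hd]
  have := (stdAddChar.mulShift y).sum_ite_sub_mem (zmultiples (d : ZMod n)) x
  simp only [AddChar.mulShift_apply, forall_mem_zmultiples_stdAddChar_mul_eq_one_iff,
    card_zmultiples_natCast hd] at this
  exact this

end ZMod

section

variable {n : ℕ} [NeZero n]

theorem stilde_apply (a b : ZMod n) :
    Stilde n a b = ((n : ℂ) ^ ((1 : ℂ) / 2))⁻¹ * stdAddChar (a * b) := by
  have hab : a * b = ((a.val * b.val : ℕ) : ZMod n) := by simp
  rw [Stilde, stdAddChar_apply, hab, toCircle_natCast]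
  push_cast
  ring_nf

theorem stilde_isSymm : (Stilde n).IsSymm :=
  Matrix.IsSymm.ext fun a b ↦ by rw [stilde_apply, stilde_apply, mul_comm a]

theorem btilde_mul_stilde_apply {d : ℕ} (hd : d ∣ n) (ℓ : ℤ) (a b : ZMod n) :
    (Btilde n d ℓ * Stilde n) a b = ((n : ℂ) ^ ((1 : ℂ) / 2))⁻¹ *
      if (d : ZMod n) * a = 0 ∧ (d : ZMod n) * b = 0 then
        (n / d : ℕ) * stdAddChar (a * b * (ℓ : ZMod n)) else 0 := by
  simp only [Matrix.mul_apply, Btilde, stilde_apply, ← natCast_mul_eq_zero_iff]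
  by_cases ha : (d : ZMod n) * a = 0
  · have := sum_ite_intCast_dvd_val_sub hd (a.val * ℓ) b
    simp only [Int.cast_mul, Int.cast_natCast, natCast_zmod_val] at this
    simp only [ha, true_and, ite_mul, one_mul, zero_mul]
    rw [mul_comm a b, mul_assoc, ← this, mul_sum]
    simp only [mul_ite, mul_zero, mul_comm b]
  · simp [ha]

theorem btilde_isSymm {d : ℕ} (hd : d ∣ n) (hnd : n ∣ d ^ 2) {ℓ : ℤ}
    (hl : ℓ ^ 2 ≡ 1 [ZMOD ((d ^ 2 / n : ℕ) : ℤ)]) : (Btilde n d ℓ).IsSymm := by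
  obtain ⟨m, hm⟩ := hd
  have hd0 : 0 < d := Nat.pos_of_ne_zero fun h ↦ NeZero.ne n (by simp [hm, h])
  obtain ⟨k, hk⟩ : m ∣ d := (Nat.mul_dvd_mul_iff_left hd0).mp (by rwa [← hm, ← sq])
  have hkℓ : (k : ℤ) ∣ ℓ ^ 2 - 1 := by
    have hdn : d ^ 2 / n = k :=
      Nat.div_eq_of_eq_mul_left (NeZero.pos n) (by rw [hm, sq, hk]; ring)
    rw [hdn] at hl
    exact hl.symm.dvd
  have hval (x : ℕ) : n ∣ d * x ↔ (m : ℤ) ∣ x := by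
    rw [hm, Nat.mul_dvd_mul_iff_left hd0, Int.natCast_dvd_natCast]
  have hdZ : (d : ℤ) = m * k := by exact_mod_cast hk
  refine Matrix.IsSymm.ext fun b c ↦ ?_
  simp only [Btilde, hval, hdZ]
  exact if_congr ⟨fun h ↦ Int.dvd_and_mul_dvd_sub_mul_swap hkℓ h.1 h.2,
    fun h ↦ Int.dvd_and_mul_dvd_sub_mul_swap hkℓ h.1 h.2⟩ rfl rfl

end

theorem Btilde_commute_Stilde_general (n d : ℕ) [NeZero n]
    (hd : d ∣ n) (hnd : n ∣ d ^ 2) (ℓ : ℤ)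
    (hl : ℓ ^ 2 ≡ 1 [ZMOD ((d ^ 2 / n : ℕ) : ℤ)]) :
    Btilde n d ℓ * Stilde n = Stilde n * Btilde n d ℓ := by
  have hBS : (Btilde n d ℓ * Stilde n).IsSymm :=
    Matrix.IsSymm.ext fun a b ↦ by
      simp only [btilde_mul_stilde_apply hd, and_comm, mul_comm b a]
  rw [← hBS.eq, Matrix.transpose_mul, stilde_isSymm.eq, (btilde_isSymm hd hnd hl).eq]

/-- `B̃(d,ℓ)` commutes with `S̃`. -/
theorem Btilde_commute_Stilde (n d : ℕ) [NeZero n] (hodd : Odd n) (hpos : 0 < n)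
    (hd : d ∣ n) (hnd : n ∣ d ^ 2) (ℓ : ℤ)
    (hl : ℓ ^ 2 ≡ 1 [ZMOD ((d ^ 2 / n : ℕ) : ℤ)]) :
    Btilde n d ℓ * Stilde n = Stilde n * Btilde n d ℓ :=
  Btilde_commute_Stilde_general n d hd hnd ℓ hl
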